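/- arXiv:1805.05434 — 3 statements merged into one kernel-verified Lean document; each statement's English description precedes it below -/
import Mathlib

section
/- Let a > β_U > 0, 0 < σ < τ, and let δ_∞ = z₂ + σ + ln((a - β_U(1-e^{-σ}))/a) and T̃ = z₂ + τ. Then the period T^{(∞)} := T̃ - δ_∞ of the rapidly oscillating unstable periodic solution satisfies τ - σ < T^{(∞)} < τ. -/
/-!
Write `T̃ - δ_∞ = τ - σ - log q` with `q = 1 - r (1 - e^{-σ})` and `r = β_U / a ∈ (0, 1)`.
Then `q = (1 - r) + r e^{-σ}` is a proper convex combination of `1` and `e^{-σ} < 1`, so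
`e^{-σ} < q < 1`, i.e. `-σ < log q < 0`.
-/

open Real

lemma log_one_sub_mul_one_sub_exp_neg_mem_Ioo {r s : ℝ} (hr0 : 0 < r) (hr1 : r < 1)
    (hs : 0 < s) : log (1 - r * (1 - exp (-s))) ∈ Set.Ioo (-s) 0 := by
  have he0 : 0 < exp (-s) := exp_pos _
  have he1 : exp (-s) < 1 := exp_lt_one_iff.mpr (neg_neg_of_pos hs)
  have hlow : exp (-s) < 1 - r * (1 - exp (-s)) := by nlinarith
  have hup : 1 - r * (1 - exp (-s)) < 1 := by nlinarith
  constructor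
  · calc -s = log (exp (-s)) := (log_exp _).symm
      _ < log (1 - r * (1 - exp (-s))) := log_lt_log he0 hlow
  · exact log_neg (he0.trans hlow) hup

theorem rapid_period_bounds_general (βU a σ τ z₂ : ℝ) (hβU : βU > 0) (ha : a > βU)
    (hσ0 : 0 < σ) :
    let δinf : ℝ := z₂ + σ + Real.log ((a - βU * (1 - Real.exp (-σ))) / a)
    let T : ℝ := z₂ + τ
    τ - σ < T - δinf ∧ T - δinf < τ := by
  intro δinf T
  have ha0 : 0 < a := hβU.trans ha
  have hq : (a - βU * (1 - exp (-σ))) / a = 1 - βU / a * (1 - exp (-σ)) := by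
    field_simp
  obtain ⟨hlow, hup⟩ := log_one_sub_mul_one_sub_exp_neg_mem_Ioo (div_pos hβU ha0)
    ((div_lt_one ha0).mpr ha) hσ0
  simp only [δinf, T, hq]
  constructor <;> linarith

theorem rapid_period_bounds (βU a σ τ z₂ : ℝ) (hβU : βU > 0) (ha : a > βU)
    (hσ0 : 0 < σ) (hστ : σ < τ) :
    let δinf : ℝ := z₂ + σ + Real.log ((a - βU * (1 - Real.exp (-σ))) / a)
    let T : ℝ := z₂ + τ
    τ - σ < T - δinf ∧ T - δinf < τ :=
  rapid_period_bounds_general βU a σ τ z₂ hβU ha hσ0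
end

section
/- Let a > β_U > 0, 0 < σ < τ, δ_∞ = z₂ + σ + ln((a - β_U(1-e^{-σ}))/a). Define the rapid-cycle minimum x̲^{(Δ)} := β_U(e^{-(δ_∞ - z₂)} - 1) and the limit-cycle minimum x̲ := -β_U(1 - e^{-τ}). Then x̲^{(Δ)} > x̲. -/
/-! `δ_∞ - z₂ = σ + ln q` with `q = (a - β_U (1 - e^{-σ})) / a ∈ (0, 1]`, because the loss
`β_U (1 - e^{-σ})` lies in `[0, β_U] ⊂ [0, a)`. Hence `δ_∞ - z₂ ≤ σ < τ`, and
`t ↦ β_U (e^{-t} - 1)` is strictly decreasing. -/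

open Real

lemma log_div_sub_mul_one_sub_exp_nonpos {b a s : ℝ} (hb : 0 ≤ b) (hba : b < a) (hs : 0 ≤ s) :
    log ((a - b * (1 - exp (-s))) / a) ≤ 0 := by
  have ha : 0 < a := hb.trans_lt hba
  have hexp_le : exp (-s) ≤ 1 := exp_le_one_iff.mpr (neg_nonpos.mpr hs)
  have hloss_nonneg : 0 ≤ b * (1 - exp (-s)) := mul_nonneg hb (sub_nonneg.mpr hexp_le)
  have hloss_lt : b * (1 - exp (-s)) < a := by
    have : b * (1 - exp (-s)) ≤ b := mul_le_of_le_one_right hb (by linarith [exp_pos (-s)])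
    linarith
  refine log_nonpos (div_nonneg (by linarith) ha.le) ?_
  rw [div_le_one ha]
  linarith

lemma mul_exp_neg_sub_one_strictAnti {b : ℝ} (hb : 0 < b) :
    StrictAnti fun t : ℝ => b * (exp (-t) - 1) := fun _ _ hst =>
  mul_lt_mul_of_pos_left (sub_lt_sub_right (exp_lt_exp.mpr (neg_lt_neg hst)) 1) hb

theorem rapid_min_gt_slow_min (βU a σ τ z₂ : ℝ) (hβU : βU > 0) (ha : a > βU)
    (hσ0 : 0 < σ) (hστ : σ < τ) :
    let δinf : ℝ := z₂ + σ + Real.log ((a - βU * (1 - Real.exp (-σ))) / a)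
    βU * (Real.exp (-(δinf - z₂)) - 1) > -βU * (1 - Real.exp (-τ)) := by
  intro δinf
  have hlog := log_div_sub_mul_one_sub_exp_nonpos hβU.le ha hσ0.le
  have hshift : δinf - z₂ < τ := by simp only [δinf]; linarith
  calc -βU * (1 - exp (-τ)) = βU * (exp (-τ) - 1) := by ring
    _ < βU * (exp (-(δinf - z₂)) - 1) := mul_exp_neg_sub_one_strictAnti hβU hshift
end

section
/- Let a = β_L + β_U with β_L, β_U > 0, 0 < σ < τ, and δ_∞ = z₂ + σ + ln((a - β_U(1-e^{-σ}))/a). Define x̄^{(Δ)} := a(1 - e^{-σ}) + β_U(e^{z₂ - δ_∞ - σ} - 1) and x̄ := β_L(1 - e^{-τ}). Then x̄^{(Δ)} < x̄. -/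
/-!
Write `E = exp (-σ)` and `D = βL + βU E = a - βU (1 - E)`. The phase shift `δ_∞` is built so that
`exp (z₂ - δ_∞ - σ) = E² a / D`, and with this the rapid maximum collapses to `βL (1 - a E / D)`.
Since `0 < E ≤ 1` the factor `a / D` is at least `1`, so `a E / D ≥ E = exp (-σ) > exp (-τ)`, and the
rapid maximum is below the slow one `βL (1 - exp (-τ))`.
-/

open Real

lemma exp_sub_add_add_log_sub (z s q : ℝ) (hq : 0 < q) :
    exp (z - (z + s + log q) - s) = exp (-s) ^ 2 / q := by
  rw [show z - (z + s + log q) - s = -s + -s - log q by ring, exp_sub, exp_add, exp_log hq, sq]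

lemma rapid_max_eq (βL βU E : ℝ) (hD : βL + βU * E ≠ 0) :
    (βL + βU) * (1 - E) + βU * (E ^ 2 * (βL + βU) / (βL + βU * E) - 1)
      = βL * (1 - (βL + βU) * E / (βL + βU * E)) := by
  field_simp
  ring

lemma le_add_mul_div_add_mul {βL βU E : ℝ} (hβL : 0 < βL) (hβU : 0 ≤ βU) (hE0 : 0 ≤ E)
    (hE1 : E ≤ 1) : E ≤ (βL + βU) * E / (βL + βU * E) := by
  have hD : 0 < βL + βU * E := by positivity
  rw [le_div_iff₀ hD]
  nlinarith [mul_nonneg hβU (mul_nonneg hE0 (sub_nonneg.mpr hE1))]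

theorem rapid_max_lt_slow_max (βU βL σ τ z₂ : ℝ) (hβU : βU > 0) (hβL : βL > 0)
    (hσ0 : 0 < σ) (hστ : σ < τ) :
    let a : ℝ := βL + βU
    let δinf : ℝ := z₂ + σ + Real.log ((a - βU * (1 - Real.exp (-σ))) / a)
    a * (1 - Real.exp (-σ)) + βU * (Real.exp (z₂ - δinf - σ) - 1)
      < βL * (1 - Real.exp (-τ)) := by
  intro a δinf
  set E := exp (-σ)
  have hE0 : 0 < E := exp_pos _
  have hE1 : E ≤ 1 := exp_le_one_iff.mpr (by linarith)
  have hD : 0 < βL + βU * E := by positivity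
  have hDa : (a - βU * (1 - E)) / a = (βL + βU * E) / a := by ring
  have hexp : exp (z₂ - δinf - σ) = E ^ 2 * a / (βL + βU * E) := by
    rw [show δinf = z₂ + σ + log ((βL + βU * E) / a) from congrArg (fun q => z₂ + σ + log q) hDa,
      exp_sub_add_add_log_sub _ _ _ (by positivity), div_div_eq_mul_div]
  have hslow : exp (-τ) < (βL + βU) * E / (βL + βU * E) :=
    (exp_lt_exp.mpr (by linarith)).trans_le (le_add_mul_div_add_mul hβL hβU.le hE0.le hE1)
  rw [hexp, rapid_max_eq βL βU E hD.ne']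
  gcongr
end
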